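/- Let r ≥ 1 and m ≥ 1 be integers and let S ⊆ A(r,m) be a subset with exactly r elements. Then S is a pierced simplex if and only if S contains exactly one point of each color i ∈ {1,…,r}. -/
import Mathlib


/-- The point `a_{i,j,k}` of the construction `A(r,m)` (indices `i,j,k` are 1-based). -/
noncomputable def pt (r m i j k : ℕ) : Fin r → ℝ := fun l =>
  if (l : ℕ) + 1 = i then
    (∑ l' ∈ Finset.Icc (j + 1) r, (m : ℝ) ^ (2 * r - 2 * l' + 3))
      + ((r - j : ℕ) : ℝ) * (m : ℝ) + (k : ℝ)
  else if j + 1 ≤ (l : ℕ) + 1 then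
    -((m : ℝ) ^ (2 * r - 2 * ((l : ℕ) + 1) + 3))
  else 0

/-- The point set `A(r,m) ⊆ ℝ^r`. -/
def Apts (r m : ℕ) : Set (Fin r → ℝ) :=
  {x | ∃ i j k : ℕ, 1 ≤ i ∧ i ≤ j ∧ j ≤ r ∧ 1 ≤ k ∧ k ≤ m ∧ x = pt r m i j k}

/-- The set `C_i` of points of `A(r,m)` of color `i`. -/
def colorSet (r m i : ℕ) : Set (Fin r → ℝ) :=
  {x | ∃ j k : ℕ, 1 ≤ i ∧ i ≤ j ∧ j ≤ r ∧ 1 ≤ k ∧ k ≤ m ∧ x = pt r m i j k}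

/-- The set `L_j` of points of `A(r,m)` of layer `j`. -/
def layerSet (r m j : ℕ) : Set (Fin r → ℝ) :=
  {x | ∃ i k : ℕ, 1 ≤ i ∧ i ≤ j ∧ j ≤ r ∧ 1 ≤ k ∧ k ≤ m ∧ x = pt r m i j k}

/-- A set `S ⊆ ℝ^r` is pierced if its convex hull meets the line `ℝ·1_r`. -/
def Pierced {r : ℕ} (S : Set (Fin r → ℝ)) : Prop :=
  ∃ c : ℝ, (fun _ => c : Fin r → ℝ) ∈ convexHull ℝ S

/-- The `i`-th standard basis vector of `ℝ^r` (1-based index). -/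
def stdVec (r i : ℕ) : Fin r → ℝ := fun l => if (l : ℕ) + 1 = i then 1 else 0

-- positive coordinate
lemma pt_pos_coord (r m i j k : ℕ) (hi : 1 ≤ i) (hij : i ≤ j) (hjr : j ≤ r)
    (hk : 1 ≤ k) (l : Fin r) (hl : (l : ℕ) + 1 = i) : 1 ≤ pt r m i j k l := by
  unfold pt
  rw [if_pos hl]
  have h1 : (0:ℝ) ≤ ∑ l' ∈ Finset.Icc (j + 1) r, (m : ℝ) ^ (2 * r - 2 * l' + 3) := by
    positivity
  have h2 : (0:ℝ) ≤ ((r - j : ℕ) : ℝ) * (m : ℝ) := by positivity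
  have h3 : (1:ℝ) ≤ (k : ℝ) := by exact_mod_cast hk
  linarith

lemma pt_nonpos_coord (r m i j k : ℕ) (l : Fin r) (hl : (l : ℕ) + 1 ≠ i) :
    pt r m i j k l ≤ 0 := by
  unfold pt
  rw [if_neg hl]
  split
  · have : (0:ℝ) ≤ (m : ℝ) ^ (2 * r - 2 * ((l : ℕ) + 1) + 3) := by positivity
    linarith
  · exact le_refl 0

lemma sum_pt (r m i j k : ℕ) (hi : 1 ≤ i) (hij : i ≤ j) (hjr : j ≤ r) :
    ∑ l : Fin r, pt r m i j k l = ((r - j : ℕ) : ℝ) * (m : ℝ) + (k : ℝ) := by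
  set A : ℝ := (∑ l' ∈ Finset.Icc (j + 1) r, (m : ℝ) ^ (2 * r - 2 * l' + 3))
      + ((r - j : ℕ) : ℝ) * (m : ℝ) + (k : ℝ) with hA
  set F : ℕ → ℝ := fun n =>
    if n + 1 = i then A
    else if j + 1 ≤ n + 1 then -((m : ℝ) ^ (2 * r - 2 * (n + 1) + 3)) else 0 with hF
  have h0 : ∑ l : Fin r, pt r m i j k l = ∑ n ∈ Finset.range r, F n :=
    Fin.sum_univ_eq_sum_range F r
  rw [h0]
  have h1 : ∀ n ∈ Finset.range r, F n =
      (if n = i - 1 then A else 0)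
        + (if n ∈ Finset.Ico j r then -((m : ℝ) ^ (2 * r - 2 * (n + 1) + 3)) else 0) := by
    intro n hn
    rw [Finset.mem_range] at hn
    by_cases h : n + 1 = i
    · have e1 : n = i - 1 := by omega
      have e3 : i - 1 + 1 = i := by omega
      have e4 : ¬ j ≤ i - 1 := by omega
      simp [hF, h, e1, e3, e4, Finset.mem_Ico]
    · have e1 : ¬(n = i - 1) := by omega
      by_cases h2 : j + 1 ≤ n + 1
      · have e2 : j ≤ n ∧ n < r := by omega
        simp [hF, h, e1, e2, Finset.mem_Ico]
      · have e3 : ¬ j ≤ n := by omega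
        simp [hF, h, h2, e1, e3, Finset.mem_Ico]
  rw [Finset.sum_congr rfl h1, Finset.sum_add_distrib]
  have h2 : ∑ n ∈ Finset.range r, (if n = i - 1 then A else 0) = A := by
    rw [Finset.sum_ite_eq' (Finset.range r) (i-1) (fun _ => A)]
    rw [if_pos (Finset.mem_range.mpr (by omega))]
  have h3 : ∑ n ∈ Finset.range r,
      (if n ∈ Finset.Ico j r then -((m : ℝ) ^ (2 * r - 2 * (n + 1) + 3)) else 0)
      = -(∑ l' ∈ Finset.Icc (j + 1) r, (m : ℝ) ^ (2 * r - 2 * l' + 3)) := by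
    rw [Finset.sum_ite_mem, ← Finset.sum_neg_distrib]
    have hinter : Finset.range r ∩ Finset.Ico j r = Finset.Ico j r := by
      apply Finset.inter_eq_right.mpr
      intro n hn
      rw [Finset.mem_Ico] at hn
      exact Finset.mem_range.mpr hn.2
    rw [hinter]
    rw [show Finset.Icc (j+1) r = Finset.Ico (j+1) (r+1) from (Finset.Ico_add_one_right_eq_Icc _ _).symm]
    rw [Finset.sum_Ico_eq_sum_range, Finset.sum_Ico_eq_sum_range]
    have e : r + 1 - (j + 1) = r - j := by omega
    rw [e]
    apply Finset.sum_congr rfl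
    intro t ht
    congr 2
    omega
  rw [h2, h3, hA]
  ring

lemma mem_colorSet_coord_pos (r m i : ℕ) (hm : 1 ≤ m) (x : Fin r → ℝ)
    (hx : x ∈ colorSet r m i) (l : Fin r) (hl : (l : ℕ) + 1 = i) : 1 ≤ x l := by
  obtain ⟨j, k, hi, hij, hjr, hk1, hkm, hxe⟩ := hx
  rw [hxe]
  exact pt_pos_coord r m i j k hi hij hjr hk1 l hl

lemma mem_colorSet_coord_nonpos (r m i : ℕ) (x : Fin r → ℝ)
    (hx : x ∈ colorSet r m i) (l : Fin r) (hl : (l : ℕ) + 1 ≠ i) : x l ≤ 0 := by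
  obtain ⟨j, k, hi, hij, hjr, hk1, hkm, hxe⟩ := hx
  rw [hxe]
  exact pt_nonpos_coord r m i j k l hl

lemma colorSet_disj (r m i i' : ℕ) (hm : 1 ≤ m) (hne : i ≠ i') (x : Fin r → ℝ)
    (h : x ∈ colorSet r m i) (h' : x ∈ colorSet r m i') : False := by
  obtain ⟨j, k, hi, hij, hjr, _, _, _⟩ := h
  have hir : i ≤ r := le_trans hij hjr
  have hl : i - 1 < r := by omega
  set l : Fin r := ⟨i - 1, hl⟩ with hldef
  have hli : (l : ℕ) + 1 = i := by simp [hldef]; omega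
  have h1 : 1 ≤ x l := mem_colorSet_coord_pos r m i hm x ⟨j, k, hi, hij, hjr, ‹1 ≤ k›, ‹k ≤ m›, ‹x = pt r m i j k›⟩ l hli
  have h2 : x l ≤ 0 := mem_colorSet_coord_nonpos r m i' x h' l (by omega)
  linarith

noncomputable def gam (P M : ℕ → ℝ) (J : ℕ → ℕ) : ℕ → ℝ
  | l => (1 + M l * ∑ i ∈ (Finset.range l).attach,
      (if J i.1 ≤ l then gam P M J i.1 else 0)) / P l
  termination_by l => l
  decreasing_by exact Finset.mem_range.mp i.2

lemma gam_eq (P M : ℕ → ℝ) (J : ℕ → ℕ) (l : ℕ) :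
    gam P M J l = (1 + M l * ∑ i ∈ Finset.range l,
      (if J i ≤ l then gam P M J i else 0)) / P l := by
  rw [gam]
  congr 1
  rw [← Finset.sum_attach (Finset.range l) (fun i => if J i ≤ l then gam P M J i else 0)]

lemma gam_pos (P M : ℕ → ℝ) (J : ℕ → ℕ) (l : ℕ)
    (hP : ∀ i ≤ l, 0 < P i) (hM : ∀ i ≤ l, 0 ≤ M i) : 0 < gam P M J l := by
  induction l using Nat.strong_induction_on with
  | _ l ih =>
    rw [gam_eq]
    apply div_pos _ (hP l le_rfl)
    have hs : 0 ≤ ∑ i ∈ Finset.range l, (if J i ≤ l then gam P M J i else 0) := by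
      apply Finset.sum_nonneg
      intro i hi
      rw [Finset.mem_range] at hi
      split
      · exact le_of_lt (ih i hi (fun a ha => hP a (by omega)) (fun a ha => hM a (by omega)))
      · exact le_refl 0
    nlinarith [hM l le_rfl]

noncomputable def Pfun (r m : ℕ) (J K : ℕ → ℕ) : ℕ → ℝ := fun i =>
  (∑ l' ∈ Finset.Icc (J i + 1) r, (m : ℝ) ^ (2 * r - 2 * l' + 3))
    + ((r - J i : ℕ) : ℝ) * (m : ℝ) + ((K i : ℕ) : ℝ)

noncomputable def Mfun (r m : ℕ) : ℕ → ℝ := fun l => (m : ℝ) ^ (2 * r - 2 * (l + 1) + 3)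

lemma Pfun_pos (r m : ℕ) (J K : ℕ → ℕ) (i : ℕ) (hK : 1 ≤ K i) : 0 < Pfun r m J K i := by
  unfold Pfun
  have h1 : (0:ℝ) ≤ ∑ l' ∈ Finset.Icc (J i + 1) r, (m : ℝ) ^ (2 * r - 2 * l' + 3) := by
    positivity
  have h2 : (0:ℝ) ≤ ((r - J i : ℕ) : ℝ) * (m : ℝ) := by positivity
  have h3 : (1:ℝ) ≤ ((K i : ℕ) : ℝ) := by exact_mod_cast hK
  linarith

lemma Mfun_nonneg (r m l : ℕ) : 0 ≤ Mfun r m l := by unfold Mfun; positivity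

lemma key_sum (r m : ℕ) (hr : 1 ≤ r) (hm : 1 ≤ m) (J K : ℕ → ℕ)
    (hJ : ∀ i, i < r → i + 1 ≤ J i ∧ J i ≤ r) (hK : ∀ i, i < r → 1 ≤ K i) (l : Fin r) :
    ∑ i ∈ Finset.range r,
      gam (Pfun r m J K) (Mfun r m) J i * pt r m (i+1) (J i) (K i) l = 1 := by
  set γ := gam (Pfun r m J K) (Mfun r m) J with hγ
  have hnr : (l : ℕ) < r := l.isLt
  set n := (l : ℕ) with hn
  have hterm : ∀ i ∈ Finset.range r, γ i * pt r m (i+1) (J i) (K i) l =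
      (if i = n then γ i * Pfun r m J K i else 0)
        + (-(Mfun r m n)) * (if J i ≤ n then γ i else 0) := by
    intro i hi
    rw [Finset.mem_range] at hi
    simp only [pt]
    by_cases hin : i = n
    · have h1 : (l:ℕ) + 1 = i + 1 := by omega
      have h2 : ¬ J i ≤ n := by have := (hJ i hi).1; omega
      rw [if_pos h1, if_pos hin, if_neg h2, mul_zero, add_zero]
      rfl
    · have h1 : ¬((l:ℕ) + 1 = i + 1) := by omega
      rw [if_neg h1, if_neg hin, zero_add]
      by_cases h2 : J i + 1 ≤ (l:ℕ) + 1
      · rw [if_pos h2, if_pos (by omega : J i ≤ n)]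
        show γ i * -((m : ℝ) ^ (2 * r - 2 * ((l:ℕ) + 1) + 3)) = -(Mfun r m n) * γ i
        unfold Mfun
        ring
      · rw [if_neg h2, if_neg (by omega : ¬ J i ≤ n), mul_zero, mul_zero]
  rw [Finset.sum_congr rfl hterm, Finset.sum_add_distrib]
  rw [Finset.sum_ite_eq' (Finset.range r) n _, if_pos (Finset.mem_range.mpr hnr)]
  rw [← Finset.mul_sum]
  have hsub : ∑ i ∈ Finset.range r, (if J i ≤ n then γ i else 0)
      = ∑ i ∈ Finset.range n, (if J i ≤ n then γ i else 0) := by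
    symm
    apply Finset.sum_subset (Finset.range_subset_range.mpr (le_of_lt hnr))
    intro i hi hni
    rw [Finset.mem_range] at hi hni
    have := (hJ i hi).1
    rw [if_neg (by omega)]
  rw [hsub]
  have hPne : Pfun r m J K n ≠ 0 := ne_of_gt (Pfun_pos r m J K n (hK n hnr))
  have h3 : γ n * Pfun r m J K n
      = 1 + Mfun r m n * ∑ i ∈ Finset.range n, (if J i ≤ n then γ i else 0) := by
    rw [hγ, gam_eq, div_mul_cancel₀ _ hPne]
  linarith [h3]

lemma pierced_of_color (r m : ℕ) (hr : 1 ≤ r) (hm : 1 ≤ m) (S : Set (Fin r → ℝ))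
    (h : ∀ i : ℕ, 1 ≤ i → i ≤ r → ∃ x, x ∈ S ∧ x ∈ colorSet r m i) : Pierced S := by
  have H : ∀ i : ℕ, ∃ j k : ℕ, i < r →
      (i + 1 ≤ j ∧ j ≤ r ∧ 1 ≤ k ∧ k ≤ m ∧ pt r m (i+1) j k ∈ S) := by
    intro i
    by_cases hi : i < r
    · obtain ⟨x, hxS, j, k, _, hij, hjr, hk1, hkm, hxe⟩ := h (i+1) (by omega) (by omega)
      exact ⟨j, k, fun _ => ⟨hij, hjr, hk1, hkm, hxe ▸ hxS⟩⟩
    · exact ⟨i+1, 1, fun h' => absurd h' hi⟩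
  choose J K hJK using H
  have hJ : ∀ i, i < r → i + 1 ≤ J i ∧ J i ≤ r := fun i hi =>
    ⟨(hJK i hi).1, (hJK i hi).2.1⟩
  have hK : ∀ i, i < r → 1 ≤ K i := fun i hi => (hJK i hi).2.2.1
  set γ := gam (Pfun r m J K) (Mfun r m) J with hγ
  have hγpos : ∀ i, i < r → 0 < γ i := by
    intro i hi
    apply gam_pos
    · intro a ha
      exact Pfun_pos r m J K a (hK a (by omega))
    · intro a ha
      exact Mfun_nonneg r m a
  have hwsum : 0 < ∑ i ∈ Finset.range r, γ i :=
    Finset.sum_pos (fun i hi => hγpos i (Finset.mem_range.mp hi))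
      ⟨0, Finset.mem_range.mpr hr⟩
  have hmem := Finset.centerMass_mem_convexHull (Finset.range r)
    (fun i hi => le_of_lt (hγpos i (Finset.mem_range.mp hi))) hwsum
    (fun i hi => (hJK i (Finset.mem_range.mp hi)).2.2.2.2)
  have hz : ∑ i ∈ Finset.range r, γ i • pt r m (i+1) (J i) (K i) = (fun _ => (1:ℝ)) := by
    funext l
    rw [Finset.sum_apply]
    simp only [Pi.smul_apply, smul_eq_mul]
    exact key_sum r m hr hm J K hJ hK l
  refine ⟨(∑ i ∈ Finset.range r, γ i)⁻¹, ?_⟩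
  simp only [Finset.centerMass] at hmem
  rw [hz] at hmem
  convert hmem using 1
  funext l
  simp

lemma exists_color_of_pierced (r m : ℕ) (hr : 1 ≤ r) (hm : 1 ≤ m)
    (S : Set (Fin r → ℝ)) (hSA : S ⊆ Apts r m) (hfin : S.Finite)
    (hP : Pierced S) :
    ∀ i : ℕ, 1 ≤ i → i ≤ r → ∃ y, y ∈ S ∧ y ∈ colorSet r m i := by
  obtain ⟨c, hc⟩ := hP
  set t := hfin.toFinset with ht
  have hSt : (t : Set (Fin r → ℝ)) = S := hfin.coe_toFinset
  rw [← hSt, Finset.convexHull_eq] at hc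
  obtain ⟨w, hw0, hw1, hwc⟩ := hc
  rw [Finset.centerMass_eq_of_sum_1 _ _ hw1] at hwc
  simp only [id] at hwc
  have hsumy : ∀ y ∈ t, (1:ℝ) ≤ ∑ l : Fin r, y l := by
    intro y hy
    obtain ⟨i, j, k, hi, hij, hjr, hk1, hkm, hye⟩ := hSA (hfin.mem_toFinset.mp hy)
    rw [hye, sum_pt r m i j k hi hij hjr]
    have h2 : (0:ℝ) ≤ ((r - j : ℕ):ℝ) * (m:ℝ) := by positivity
    have h3 : (1:ℝ) ≤ (k:ℝ) := by exact_mod_cast hk1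
    linarith
  have hc1 : (1:ℝ) ≤ (r:ℝ) * c := by
    have e1 : (r:ℝ) * c = ∑ y ∈ t, w y * (∑ l : Fin r, y l) := by
      calc (r:ℝ) * c = ∑ _l : Fin r, c := by
            rw [Finset.sum_const]; simp [mul_comm]
      _ = ∑ l : Fin r, (∑ y ∈ t, w y • y) l := by rw [hwc]
      _ = ∑ l : Fin r, ∑ y ∈ t, w y * y l := by
            apply Finset.sum_congr rfl; intro l _
            rw [Finset.sum_apply]
            simp
      _ = ∑ y ∈ t, ∑ l : Fin r, w y * y l := Finset.sum_comm
      _ = ∑ y ∈ t, w y * (∑ l : Fin r, y l) := by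
            apply Finset.sum_congr rfl; intro y _; rw [Finset.mul_sum]
    rw [e1, ← hw1]
    apply Finset.sum_le_sum
    intro y hy
    nlinarith [hsumy y hy, hw0 y hy]
  have hcpos : 0 < c := by
    have hrr : (1:ℝ) ≤ (r:ℝ) := by exact_mod_cast hr
    nlinarith
  intro i hi1 hir
  have hlr : i - 1 < r := by omega
  set l : Fin r := ⟨i - 1, hlr⟩ with hl
  have hli : (l : ℕ) + 1 = i := by simp [hl]; omega
  by_contra hno
  push_neg at hno
  have hyl : ∀ y ∈ t, y l ≤ 0 := by
    intro y hy
    have hyS := hfin.mem_toFinset.mp hy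
    obtain ⟨i', j, k, hi', hij, hjr, hk1, hkm, hye⟩ := hSA hyS
    by_cases hii : i' = i
    · exact absurd (⟨j, k, hii ▸ hi', hii ▸ hij, hjr, hk1, hkm, by rw [hye, hii]⟩ :
        y ∈ colorSet r m i) (hno y hyS)
    · rw [hye]; exact pt_nonpos_coord r m i' j k l (by omega)
  have hcle : c ≤ 0 := by
    have e2 := congrFun hwc l
    rw [Finset.sum_apply] at e2
    simp only [Pi.smul_apply, smul_eq_mul] at e2
    rw [← e2]
    apply Finset.sum_nonpos
    intro y hy
    nlinarith [hw0 y hy, hyl y hy]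
  linarith

lemma unique_color (r m : ℕ) (hr : 1 ≤ r) (hm : 1 ≤ m)
    (S : Set (Fin r → ℝ)) (hfin : S.Finite) (hcard : S.ncard = r)
    (hex : ∀ i : ℕ, 1 ≤ i → i ≤ r → ∃ y, y ∈ S ∧ y ∈ colorSet r m i) :
    ∀ i : ℕ, 1 ≤ i → i ≤ r → ∃! x, x ∈ S ∧ x ∈ colorSet r m i := by
  intro i hi1 hir
  obtain ⟨x, hxS, hxc⟩ := hex i hi1 hir
  refine ⟨x, ⟨hxS, hxc⟩, ?_⟩
  rintro x' ⟨hx'S, hx'c⟩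
  by_contra hne
  have H : ∀ i' : ℕ, ∃ y, 1 ≤ i' → i' ≤ r → (y ∈ S ∧ y ∈ colorSet r m i') := by
    intro i'
    by_cases h : 1 ≤ i' ∧ i' ≤ r
    · obtain ⟨y, hy⟩ := hex i' h.1 h.2
      exact ⟨y, fun _ _ => hy⟩
    · exact ⟨x, fun h1 h2 => absurd ⟨h1, h2⟩ h⟩
  choose g hg using H
  set g' : ℕ → (Fin r → ℝ) := fun i' => if i' = i then x' else g i' with hg'
  have hg'S : ∀ i' ∈ Finset.Icc 1 r, g' i' ∈ S ∧ g' i' ∈ colorSet r m i' := by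
    intro i' hi'
    rw [Finset.mem_Icc] at hi'
    by_cases h : i' = i
    · rw [hg']; simp only [if_pos h]
      exact ⟨hx'S, h ▸ hx'c⟩
    · rw [hg']; simp only [if_neg h]
      exact hg i' hi'.1 hi'.2
  have hinj : Set.InjOn g' (Finset.Icc 1 r : Finset ℕ) := by
    intro a ha b hb hab
    by_contra hne2
    exact colorSet_disj r m a b hm hne2 (g' a) (hg'S a ha).2 (hab ▸ (hg'S b hb).2)
  set t := hfin.toFinset with ht
  have himage : insert x (Finset.image g' (Finset.Icc 1 r)) ⊆ t := by
    intro y hy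
    rw [Finset.mem_insert] at hy
    rcases hy with hy | hy
    · exact hfin.mem_toFinset.mpr (hy ▸ hxS)
    · rw [Finset.mem_image] at hy
      obtain ⟨a, ha, hay⟩ := hy
      exact hfin.mem_toFinset.mpr (hay ▸ (hg'S a ha).1)
  have hxnot : x ∉ Finset.image g' (Finset.Icc 1 r) := by
    rw [Finset.mem_image]
    rintro ⟨a, ha, hax⟩
    by_cases h : a = i
    · apply hne
      rw [← hax, hg']
      simp [h]
    · have hcol : g' a ∈ colorSet r m a := (hg'S a ha).2
      exact colorSet_disj r m a i hm h (g' a) hcol (hax ▸ hxc)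
  have hcardt : t.card = r := by
    rw [ht, ← Set.ncard_eq_toFinset_card S hfin]
    exact hcard
  have hbig : r + 1 ≤ t.card := by
    have h1 : (insert x (Finset.image g' (Finset.Icc 1 r))).card = r + 1 := by
      rw [Finset.card_insert_of_notMem hxnot, Finset.card_image_of_injOn hinj,
        Nat.card_Icc]
      omega
    calc r + 1 = (insert x (Finset.image g' (Finset.Icc 1 r))).card := h1.symm
    _ ≤ t.card := Finset.card_le_card himage
  omega

/-- an `r`-element subset of `A(r,m)` is a pierced simplex iff it
contains exactly one point of each color. -/
theorem pierced_simplex_iff_one_point_per_color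
    (r m : ℕ) (hr : 1 ≤ r) (hm : 1 ≤ m)
    (S : Set (Fin r → ℝ)) (hSA : S ⊆ Apts r m) (hcard : S.ncard = r) :
    Pierced S ↔ ∀ i : ℕ, 1 ≤ i → i ≤ r → ∃! x, x ∈ S ∧ x ∈ colorSet r m i := by
  have hfin : S.Finite := by
    by_contra h
    have h0 : S.ncard = 0 := Set.Infinite.ncard h
    omega
  constructor
  · intro hP
    exact unique_color r m hr hm S hfin hcard
      (exists_color_of_pierced r m hr hm S hSA hfin hP)
  · intro h
    exact pierced_of_color r m hr hm S (fun i h1 h2 => by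
      obtain ⟨x, hx, _⟩ := h i h1 h2
      exact ⟨x, hx⟩)
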